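/- Let G be a connected graph and S an edge metric generator with |S| = k. Then no vertex of S has degree greater than 2^{k−1}; in particular, if S contains a vertex of degree δ, then 2^{k−1} ≥ δ. -/

import Mathlib

open SimpleGraph

/-- Distance from a vertex to an edge: `d(w,e) = min over endpoints`. -/
noncomputable def edgeDist {V : Type*} (G : SimpleGraph V) (w : V) (e : Sym2 V) : ℕ :=
  Sym2.lift ⟨fun x y => min (G.dist w x) (G.dist w y), fun x y => min_comm _ _⟩ e

/-- `S` is an edge metric generator: distinct edges get distinct distance vectors. -/
def IsEdgeGenerator {V : Type*} (G : SimpleGraph V) (S : Set V) : Prop :=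
  ∀ e₁ ∈ G.edgeSet, ∀ e₂ ∈ G.edgeSet,
    (∀ w ∈ S, edgeDist G w e₁ = edgeDist G w e₂) → e₁ = e₂

/-- The edge metric dimension: minimum cardinality of an edge metric generator. -/
noncomputable def edgeMetricDim {V : Type*} (G : SimpleGraph V) : ℕ :=
  sInf {n | ∃ S : Set V, S.Finite ∧ S.ncard = n ∧ IsEdgeGenerator G S}

/-- `S` resolves all pairs of vertices. -/
def IsResolving {V : Type*} (G : SimpleGraph V) (S : Set V) : Prop :=
  ∀ x y : V, (∀ w ∈ S, G.dist w x = G.dist w y) → x = y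

/-- The metric dimension. -/
noncomputable def metricDim {V : Type*} (G : SimpleGraph V) : ℕ :=
  sInf {n | ∃ S : Set V, S.Finite ∧ S.ncard = n ∧ IsResolving G S}

/-- The generalized Petersen graph `GP n k`: outer vertices `Sum.inl i` (the `uᵢ`),
inner vertices `Sum.inr i` (the `vᵢ`). -/
def GP (n k : ℕ) : SimpleGraph (Fin n ⊕ Fin n) :=
  SimpleGraph.fromRel (fun a b =>
    match a, b with
    | Sum.inl i, Sum.inl j => (j : ℕ) = ((i : ℕ) + 1) % n
    | Sum.inl i, Sum.inr j => i = j
    | Sum.inr i, Sum.inr j => (j : ℕ) = ((i : ℕ) + k) % n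
    | _, _ => False)

/-! Each neighbour `u` of `w ∈ S` is determined by the edge `wu`, hence by its distance vector.
Its coordinate at `w` is `0`, and at any other `s ∈ S` it is `d(s,w)` or `d(s,w) - 1`, since
`d(s,u)` differs from `d(s,w)` by at most one. So one bit per vertex of `S \ {w}` pins down `u`,
and `w` has at most `2 ^ (|S| - 1)` neighbours. -/

section

variable {V : Type*} {G : SimpleGraph V} {S : Set V} {u w : V}

lemma edgeDist_mk (s x y : V) : edgeDist G s s(x, y) = min (G.dist s x) (G.dist s y) := rfl

lemma edgeDist_eq_or_eq_sub_one_of_adj (h : G.Adj w u) (s : V) :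
    edgeDist G s s(w, u) = G.dist s w ∨ edgeDist G s s(w, u) = G.dist s w - 1 := by
  rw [edgeDist_mk]
  rcases h.diff_dist_adj (u := s) with h' | h' | h' <;> omega

lemma IsEdgeGenerator.injOn_neighborSet (hgen : IsEdgeGenerator G S) (hw : w ∈ S) :
    Set.InjOn (fun u (s : ↥(S \ {w})) => decide (edgeDist G s s(w, u) = G.dist s w))
      (G.neighborSet w) := by
  intro u hu u' hu' hbits
  have hedge : s(w, u) = s(w, u') := by
    refine hgen _ hu _ hu' fun s hs => ?_
    by_cases hsw : s = w
    · subst hsw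
      simp [edgeDist_mk]
    · have hbit := congrFun hbits ⟨s, hs, hsw⟩
      simp only [decide_eq_decide] at hbit
      rcases edgeDist_eq_or_eq_sub_one_of_adj hu s with h | h <;>
        rcases edgeDist_eq_or_eq_sub_one_of_adj hu' s with h' | h' <;> omega
  exact Sym2.congr_right.mp hedge

lemma IsEdgeGenerator.degree_le_two_pow [Fintype V] [DecidableRel G.Adj]
    (hgen : IsEdgeGenerator G S) (hw : w ∈ S) : G.degree w ≤ 2 ^ (S.ncard - 1) := by
  calc G.degree w = Nat.card (G.neighborSet w) := by
        rw [← card_neighborSet_eq_degree, Nat.card_eq_fintype_card]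
    _ ≤ Nat.card (↥(S \ {w}) → Bool) :=
        Nat.card_le_card_of_injective _ (Set.injOn_iff_injective.mp (hgen.injOn_neighborSet hw))
    _ = 2 ^ (S.ncard - 1) := by
        rw [Nat.card_fun, Nat.card_eq_fintype_card (α := Bool), Fintype.card_bool,
          Nat.card_coe_set_eq, Set.ncard_sdiff_singleton_of_mem hw]

end

theorem stmt17_general {V : Type*} [Fintype V] (G : SimpleGraph V) [DecidableRel G.Adj]
    (S : Set V) (k : ℕ) (hcard : S.ncard = k)
    (hgen : IsEdgeGenerator G S) :
    ∀ w ∈ S, G.degree w ≤ 2 ^ (k - 1) :=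
  fun _ hw => hcard ▸ hgen.degree_le_two_pow hw

/-- If `S` is an edge metric generator with `|S| = k`, then no vertex of `S`
has degree greater than `2^(k-1)`. -/
theorem stmt17 {V : Type*} [Fintype V] (G : SimpleGraph V) [DecidableRel G.Adj]
    (hc : G.Connected) (S : Set V) (k : ℕ) (hfin : S.Finite) (hcard : S.ncard = k)
    (hgen : IsEdgeGenerator G S) :
    ∀ w ∈ S, G.degree w ≤ 2 ^ (k - 1) :=
  stmt17_general G S k hcard hgen
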